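/- arXiv:2601.04150 — 4 statements merged into one kernel-verified Lean document; each statement's English description precedes it below -/
import Mathlib

section
/- Every multi-parameter geometric rule satisfies partial-implementation invariance: for each profile e and each agent i, if ē is the profile obtained by setting all coordinates k < i to zero, replacing eᵢ by eᵢ + Σ_{k<i}(e_k − R^α_k(e)), and leaving coordinates j > i unchanged, then R^α_j(ē) = R^α_j(e) for all j ≥ i. -/
open Finset

/-- Profile with nonnegative inflows. -/
def NonnegP (e : ℕ → ℝ) : Prop := ∀ i, 0 ≤ e i

/-- `x` is the single-parameter geometric rule allocation with parameter `γ` for inflows `e`. -/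
def GeomRec (n : ℕ) (γ : ℝ) (e x : ℕ → ℝ) : Prop :=
  x 1 = γ * e 1 ∧
  (∀ i, 1 < i → i < n → x i = γ * (e i + ∑ k ∈ Finset.Ico 1 i, (e k - x k))) ∧
  x n = e n + ∑ k ∈ Finset.Ico 1 n, (e k - x k)

/-- `x` is the multi-parameter geometric rule allocation with parameters `α` for inflows `e`. -/
def MultiGeomRec (n : ℕ) (α : ℕ → ℝ) (e x : ℕ → ℝ) : Prop :=
  ∀ i, 1 ≤ i → i ≤ n → x i = α i * (e i + ∑ k ∈ Finset.Ico 1 i, (e k - x k))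

/-- `R` maps each nonnegative profile to a feasible non-wasteful allocation. -/
def IsRule (n : ℕ) (R : (ℕ → ℝ) → ℕ → ℝ) : Prop :=
  ∀ e, NonnegP e → (∀ i, 0 ≤ R e i) ∧
    (∀ k, 1 ≤ k → k < n → ∑ i ∈ Finset.Icc 1 k, R e i ≤ ∑ i ∈ Finset.Icc 1 k, e i) ∧
    (∑ i ∈ Finset.Icc 1 n, R e i = ∑ i ∈ Finset.Icc 1 n, e i)

/-- Scale invariance. -/
def ScaleInv (R : (ℕ → ℝ) → ℕ → ℝ) : Prop :=
  ∀ e ρ, NonnegP e → 0 ≤ ρ → ∀ i, R (fun j => ρ * e j) i = ρ * R e i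

/-- Upstream invariance. -/
def UpInv (R : (ℕ → ℝ) → ℕ → ℝ) : Prop :=
  ∀ e e' i, NonnegP e → NonnegP e' → (∀ j, j ≠ i → e j = e' j) →
    ∀ k, k < i → R e k = R e' k

/-- The residual profile used in partial-implementation invariance:
coordinates below `i` zeroed, coordinate `i` gets its inflow plus unallocated upstream flow. -/
def resid (R : (ℕ → ℝ) → ℕ → ℝ) (e : ℕ → ℝ) (i : ℕ) : ℕ → ℝ :=
  fun j => if j = i then e i + ∑ k ∈ Finset.Ico 1 i, (e k - R e k)
    else if j < i then 0 else e j

/-- Partial-implementation invariance. -/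
def PII (n : ℕ) (R : (ℕ → ℝ) → ℕ → ℝ) : Prop :=
  ∀ e i, NonnegP e → 1 ≤ i → i ≤ n →
    ∀ j, i ≤ j → j ≤ n → R (resid R e i) j = R e j

/-- Downstream impartiality. -/
def DownImp (n : ℕ) (R : (ℕ → ℝ) → ℕ → ℝ) : Prop :=
  ∀ e e' i, NonnegP e → NonnegP e' → (∀ j, j ≠ i → e' j = e j) → e i < e' i →
    ∀ k l, i < k → i < l → k ≤ n → l ≤ n → e k = e l →
      R e' k - R e k = R e' l - R e l

/-- Neutrality. -/
def Neutral (n : ℕ) (R : (ℕ → ℝ) → ℕ → ℝ) : Prop :=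
  ∀ e i, NonnegP e → 1 ≤ i → i < n → 0 < e i → (∀ j, j ≠ i → e j = 0) →
    R e i = (1 / ((n : ℝ) - i)) * ∑ k ∈ Finset.Icc (i + 1) n, R e k

/-- Equal sources. -/
def EqSources (n : ℕ) (R : (ℕ → ℝ) → ℕ → ℝ) : Prop :=
  ∀ e e' s s', NonnegP e → NonnegP e' → 1 ≤ s → s < n → 1 ≤ s' → s' < n →
    0 < e s → 0 < e' s' → (∀ k, k < s → e k = 0) → (∀ k, k < s' → e' k = 0) →
    e s = e' s' → R e s = R e' s'

/-- Closed (product) form of the multi-parameter geometric rule. -/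
noncomputable def RmultiGeo (α : ℕ → ℝ) (e : ℕ → ℝ) (i : ℕ) : ℝ :=
  α i * (e i + ∑ k ∈ Finset.Ico 1 i, (∏ j ∈ Finset.Ico k i, (1 - α j)) * e k)

/-- The serial rule. -/
noncomputable def serial (n : ℕ) (e : ℕ → ℝ) (i : ℕ) : ℝ :=
  ∑ j ∈ Finset.Icc 1 i, e j / ((n : ℝ) - j + 1)

/-- Parameters of the `β`-family member `R^{β_k}`. -/
noncomputable def betaParam (n k : ℕ) (β : ℝ) : ℕ → ℝ :=
  fun i => if i < k then 1 else if i = k then β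
    else if i < n then 1 / ((n : ℝ) - i + 1) else 1

theorem stmt7 (n : ℕ) (hn : 3 ≤ n) (α : ℕ → ℝ)
    (hα : ∀ i, 1 ≤ i → i < n → α i ∈ Set.Icc (0:ℝ) 1) (hαn : α n = 1)
    (e x : ℕ → ℝ) (he : NonnegP e) (hx : MultiGeomRec n α e x)
    (i : ℕ) (hi1 : 1 ≤ i) (hin : i ≤ n)
    (ebar : ℕ → ℝ)
    (hebar : ebar = fun j =>
      if j = i then e i + ∑ k ∈ Finset.Ico 1 i, (e k - x k)
      else if j < i then 0 else e j)
    (xbar : ℕ → ℝ) (hxbar : MultiGeomRec n α ebar xbar) :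
    ∀ j, i ≤ j → j ≤ n → xbar j = x j := by
  have hebar0 : ∀ k, k < i → ebar k = 0 := by
    intro k hk; rw [hebar]; simp [Nat.ne_of_lt hk, hk]
  have hebari : ebar i = e i + ∑ k ∈ Finset.Ico 1 i, (e k - x k) := by
    rw [hebar]; simp
  have hebarg : ∀ k, i < k → ebar k = e k := by
    intro k hk; rw [hebar]; simp [Nat.ne_of_gt hk, Nat.not_lt.mpr hk.le]
  -- Lemma A: partial sums below i vanish
  have hA : ∀ j, j ≤ i → ∑ k ∈ Finset.Ico 1 j, (ebar k - xbar k) = 0 := by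
    intro j
    induction j with
    | zero => simp
    | succ m ih =>
      intro hm
      rcases Nat.eq_zero_or_pos m with h0 | h1
      · subst h0; simp
      · have hmi : m < i := hm
        have hs := ih hmi.le
        have hxm : xbar m = α m * (ebar m + ∑ k ∈ Finset.Ico 1 m, (ebar k - xbar k)) :=
          hxbar m h1 (hmi.le.trans hin)
        rw [Finset.sum_Ico_succ_top h1, hs, hxm, hs, hebar0 m hmi]
        ring
  -- Main induction from i upward, carrying the sum identity
  have key : ∀ j, i ≤ j → j ≤ n →
      xbar j = x j ∧
      ∑ k ∈ Finset.Ico 1 (j+1), (ebar k - xbar k)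
        = ∑ k ∈ Finset.Ico 1 (j+1), (e k - x k) := by
    intro j hij
    induction j, hij using Nat.le_induction with
    | base =>
      intro hin'
      have hxi : xbar i = α i * (ebar i + ∑ k ∈ Finset.Ico 1 i, (ebar k - xbar k)) :=
        hxbar i hi1 hin
      have hxi' : x i = α i * (e i + ∑ k ∈ Finset.Ico 1 i, (e k - x k)) := hx i hi1 hin
      have hxbeq : xbar i = x i := by
        rw [hxi, hA i le_rfl, hebari, hxi']; ring
      refine ⟨hxbeq, ?_⟩
      rw [Finset.sum_Ico_succ_top hi1, Finset.sum_Ico_succ_top hi1, hA i le_rfl,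
        hebari, hxbeq]
      ring
    | succ j hij ih =>
      intro hjn
      have hjn' : j ≤ n := (Nat.le_succ j).trans hjn
      obtain ⟨hxj, hsum⟩ := ih hjn'
      have h1j1 : 1 ≤ j + 1 := Nat.le_add_left 1 j
      have hxb : xbar (j+1) = α (j+1) * (ebar (j+1) + ∑ k ∈ Finset.Ico 1 (j+1), (ebar k - xbar k)) :=
        hxbar (j+1) h1j1 hjn
      have hxv : x (j+1) = α (j+1) * (e (j+1) + ∑ k ∈ Finset.Ico 1 (j+1), (e k - x k)) :=
        hx (j+1) h1j1 hjn
      have heq : ebar (j+1) = e (j+1) := hebarg (j+1) (Nat.lt_succ_of_le hij)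
      have hxbeq : xbar (j+1) = x (j+1) := by rw [hxb, heq, hsum, hxv]
      refine ⟨hxbeq, ?_⟩
      rw [Finset.sum_Ico_succ_top h1j1, Finset.sum_Ico_succ_top h1j1, hsum, heq, hxbeq]
  intro j hij hjn
  exact (key j hij hjn).1
end

section
/- The serial rule coincides with the multi-parameter geometric rule with parameters αᵢ = 1/(n−i+1) for i < n and α_n = 1: for all e ∈ ℝ₊ⁿ and all i, Σ_{j≤i} e_j/(n−j+1) equals the value assigned to agent i by the recursive geometric rule with these parameters. -/
open Finset

lemma serial_aux (n : ℕ) (e : ℕ → ℝ) :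
    ∀ i, i ≤ n → (∑ k ∈ Finset.Ico 1 i, (e k - serial n e k)) =
      ((n : ℝ) - i + 1) * ∑ j ∈ Finset.Ico 1 i, e j / ((n : ℝ) - j + 1) := by
  intro i
  induction i with
  | zero => simp
  | succ i ih =>
    intro hi
    rcases Nat.eq_zero_or_pos i with h0 | hpos
    · subst h0; simp
    have hi' : i ≤ n := le_of_lt hi
    have hci : ((n : ℝ) - i + 1) ≠ 0 := by
      have : (i : ℝ) ≤ n := by exact_mod_cast hi'
      linarith
    have hser : serial n e i = (∑ j ∈ Finset.Ico 1 i, e j / ((n : ℝ) - j + 1))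
        + e i / ((n : ℝ) - i + 1) := by
      unfold serial
      rw [show Finset.Icc 1 i = Finset.Ico 1 (i + 1) by rw [Finset.Ico_add_one_right_eq_Icc],
        Finset.sum_Ico_succ_top hpos]
    rw [Finset.sum_Ico_succ_top hpos, Finset.sum_Ico_succ_top hpos, ih hi', hser]
    push_cast
    field_simp
    ring

theorem stmt11 (n : ℕ) (hn : 3 ≤ n) (e x : ℕ → ℝ) (he : NonnegP e)
    (hx : MultiGeomRec n (fun i => 1 / ((n : ℝ) - i + 1)) e x) :
    ∀ i, 1 ≤ i → i ≤ n → x i = serial n e i := by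
  intro i
  induction i using Nat.strong_induction_on with
  | _ i ih =>
    intro h1 hn'
    have hxi := hx i h1 hn'
    have hsum : ∑ k ∈ Finset.Ico 1 i, (e k - x k)
        = ∑ k ∈ Finset.Ico 1 i, (e k - serial n e k) := by
      refine Finset.sum_congr rfl fun k hk => ?_
      obtain ⟨h1k, hki⟩ := Finset.mem_Ico.mp hk
      rw [ih k hki h1k (le_trans (le_of_lt hki) hn')]
    have hci : ((n : ℝ) - i + 1) ≠ 0 := by
      have : (i : ℝ) ≤ n := by exact_mod_cast hn'
      linarith
    have hser : serial n e i = (∑ j ∈ Finset.Ico 1 i, e j / ((n : ℝ) - j + 1))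
        + e i / ((n : ℝ) - i + 1) := by
      unfold serial
      rw [show Finset.Icc 1 i = Finset.Ico 1 (i + 1) by rw [Finset.Ico_add_one_right_eq_Icc],
        Finset.sum_Ico_succ_top h1]
    rw [hxi, hsum, serial_aux n e i hn', hser]
    field_simp
    ring
end

section
/- The serial rule satisfies downstream impartiality: if e' is obtained from e by increasing coordinate i, then for any two agents k, l > i with e_k = e_l, R^S_k(e') − R^S_k(e) = R^S_l(e') − R^S_l(e). -/
open Finset

theorem stmt14 (n : ℕ) (hn : 3 ≤ n) (e e' : ℕ → ℝ)
    (he : NonnegP e) (he' : NonnegP e') (i : ℕ)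
    (hee' : ∀ j, j ≠ i → e' j = e j) (hinc : e i < e' i) :
    ∀ k l, i < k → i < l → k ≤ n → l ≤ n → e k = e l →
      serial n e' k - serial n e k = serial n e' l - serial n e l := by
  have key : ∀ m, i < m →
      serial n e' m - serial n e m =
        if 1 ≤ i ∧ i ≤ m then (e' i - e i) / ((n : ℝ) - i + 1) else 0 := by
    intro m hm
    unfold serial
    rw [← Finset.sum_sub_distrib]
    have : ∀ j ∈ Finset.Icc 1 m,
        e' j / ((n : ℝ) - j + 1) - e j / ((n : ℝ) - j + 1) =
          if j = i then (e' i - e i) / ((n : ℝ) - i + 1) else 0 := by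
      intro j _
      by_cases h : j = i
      · subst h; simp [div_sub_div_same]
      · simp [h, hee' j h]
    rw [Finset.sum_congr rfl this, Finset.sum_ite_eq' (Finset.Icc 1 m) i]
    simp [Finset.mem_Icc]
  intro k l hk hl hkn hln _
  rw [key k hk, key l hl]
  simp [le_of_lt hk, le_of_lt hl]
end

section
/- For each k ∈ {1,...,n-1} and β_k ∈ [0,1), the multi-parameter geometric rule R^{β_k} with parameters αᵢ = 1 for i < k, α_k = β_k, αᵢ = 1/(n−i+1) for k < i < n, and α_n = 1, coincides with the additive rule R^{δ^k} defined by R^{δ^k}ᵢ(e) = δ^kᵢ eᵢ + Σ_{j<i} (1−δ^k_j)e_j/(n−j), where δ^kᵢ = 1 for i < k, δ^k_k = β_k, δ^kᵢ = 1/(n−i+1) for k < i < n, and δ^k_n = 1. -/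
open Finset

/-!
Below `k` every parameter equals `1`, so the flow of agents `j < k` never passes agent `j` and
both rules give it nothing downstream. From `k` on, the parameters are those of the serial rule,
`α r = 1 / (n - r + 1)`, for which the fraction `∏ (1 - α r)` of agent `j`'s flow reaching `i`
telescopes to `(1 - α j) (n - i + 1) / (n - j)`; multiplying by `α i` leaves the equal share
`(1 - α j) / (n - j)` of the additive rule.
-/

theorem Finset.prod_Ico_div_of_ne_zero {K : Type*} [Field K] {f : ℕ → K} {a b : ℕ} (hab : a ≤ b)
    (hf : ∀ i ∈ Icc a b, f i ≠ 0) : ∏ i ∈ Ico a b, f (i + 1) / f i = f b / f a := by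
  induction b, hab using Nat.le_induction with
  | base => simp [div_self (hf a (by simp))]
  | succ b hab ih =>
    rw [prod_Ico_succ_top hab, ih fun i hi => hf i (Icc_subset_Icc_right b.le_succ hi)]
    have hb : f b ≠ 0 := hf b (by simp [hab])
    field_simp

noncomputable def additiveRule (n : ℕ) (δ : ℕ → ℝ) (e : ℕ → ℝ) (i : ℕ) : ℝ :=
  δ i * e i + ∑ j ∈ Ico 1 i, (1 - δ j) * e j / ((n : ℝ) - j)

section SerialTail

variable {n k : ℕ} {α : ℕ → ℝ}

theorem prod_one_sub_of_serial_tail (hα : ∀ r, k < r → r ≤ n → α r = 1 / ((n : ℝ) - r + 1))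
    {i j : ℕ} (hkj : k ≤ j) (hji : j < i) (hin : i ≤ n) :
    ∏ r ∈ Ico (j + 1) i, (1 - α r) = ((n : ℝ) - i + 1) / ((n : ℝ) - j) := by
  have hden (r : ℕ) (hr : r ≤ n) : (n : ℝ) - r + 1 ≠ 0 := by
    have : (r : ℝ) ≤ n := by exact_mod_cast hr
    linarith
  have hfactor : ∀ r ∈ Ico (j + 1) i,
      1 - α r = ((n : ℝ) - ↑(r + 1) + 1) / ((n : ℝ) - r + 1) := by
    intro r hr
    rw [mem_Ico] at hr
    rw [hα r (by omega) (by omega)]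
    field_simp [hden r (by omega)]
    push_cast
    ring
  rw [prod_congr rfl hfactor,
    prod_Ico_div_of_ne_zero (f := fun r : ℕ => (n : ℝ) - r + 1) hji
      fun r hr => hden r (by rw [mem_Icc] at hr; omega)]
  push_cast
  ring

theorem mul_prod_one_sub_of_serial_tail (hhead : ∀ r, r < k → α r = 1)
    (htail : ∀ r, k < r → r ≤ n → α r = 1 / ((n : ℝ) - r + 1))
    {i j : ℕ} (hji : j < i) (hin : i ≤ n) :
    α i * ∏ r ∈ Ico j i, (1 - α r) = (1 - α j) / ((n : ℝ) - j) := by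
  rcases lt_or_ge j k with hjk | hkj
  · have hzero : ∏ r ∈ Ico j i, (1 - α r) = 0 :=
      prod_eq_zero (mem_Ico.mpr ⟨le_rfl, hji⟩) (by rw [hhead j hjk, sub_self])
    rw [hzero, hhead j hjk]
    simp
  · have hj : (n : ℝ) - j ≠ 0 := by
      have : (j : ℝ) < n := by exact_mod_cast hji.trans_le hin
      linarith
    have hi : (n : ℝ) - i + 1 ≠ 0 := by
      have : (i : ℝ) ≤ n := by exact_mod_cast hin
      linarith
    rw [prod_eq_prod_Ico_succ_bot hji, prod_one_sub_of_serial_tail htail hkj hji hin,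
      htail i (by omega) hin]
    field_simp

theorem RmultiGeo_eq_additiveRule (hhead : ∀ r, r < k → α r = 1)
    (htail : ∀ r, k < r → r ≤ n → α r = 1 / ((n : ℝ) - r + 1)) (e : ℕ → ℝ) {i : ℕ}
    (hin : i ≤ n) : RmultiGeo α e i = additiveRule n α e i := by
  rw [RmultiGeo, additiveRule, mul_add, mul_sum]
  congr 1
  refine sum_congr rfl fun j hj => ?_
  rw [← mul_assoc, mul_prod_one_sub_of_serial_tail hhead htail (mem_Ico.mp hj).2 hin]
  ring

end SerialTail

theorem betaParam_of_lt {n k r : ℕ} (β : ℝ) (hr : r < k) : betaParam n k β r = 1 := by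
  simp [betaParam, hr]

theorem betaParam_of_gt {n k r : ℕ} (β : ℝ) (hkr : k < r) (hrn : r ≤ n) :
    betaParam n k β r = 1 / ((n : ℝ) - r + 1) := by
  rcases hrn.lt_or_eq with hrn | rfl
  · simp [betaParam, hrn, hkr.ne', hkr.not_gt]
  · simp [betaParam, hkr.ne', hkr.not_gt]

theorem stmt16_general (n : ℕ) (k : ℕ)
    (β : ℝ) (e : ℕ → ℝ) :
    ∀ i, 1 ≤ i → i ≤ n →
      RmultiGeo (betaParam n k β) e i =
        betaParam n k β i * e i +
          ∑ j ∈ Finset.Ico 1 i, (1 - betaParam n k β j) * e j / ((n : ℝ) - j) := fun _ _ hin =>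
  RmultiGeo_eq_additiveRule (fun _ => betaParam_of_lt β) (fun _ => betaParam_of_gt β) e hin

theorem stmt16 (n : ℕ) (hn : 3 ≤ n) (k : ℕ) (hk1 : 1 ≤ k) (hkn : k < n)
    (β : ℝ) (hβ : 0 ≤ β ∧ β < 1) (e : ℕ → ℝ) (he : NonnegP e) :
    ∀ i, 1 ≤ i → i ≤ n →
      RmultiGeo (betaParam n k β) e i =
        betaParam n k β i * e i +
          ∑ j ∈ Finset.Ico 1 i, (1 - betaParam n k β j) * e j / ((n : ℝ) - j) :=
  stmt16_general n k β e
end
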